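/- If a family 𝒯 of subsets of a finite set U with the strict-superset edge relation forms a multitree, then for any σ ∈ 𝒯, the sets in 𝒯 that are subsets of σ, ordered by strict containment with covering edges, form a tree rooted at σ whose leaves are the singletons of elements of σ (assuming all singletons of elements of σ lie in 𝒯). -/

import Mathlib

/-!
Finiteness puts a maximal member of `𝒯` strictly between any `τ ⊂ σ` in `𝒯`, and that member is
a covering child of `σ` containing `τ`; descending along such children reaches every member below
`σ`. Parents are unique by the multitree condition at `σ`. A member has a child iff some member is
strictly smaller; since all singletons are members and `∅` is not, this fails exactly for
singletons.
-/

/-- Covering edge of the projection signature graph: `τ₂` is a child of `τ₁`. -/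
def CovEdge {U : Type*} (𝒯 : Set (Set U)) (τ₁ τ₂ : Set U) : Prop :=
  τ₁ ∈ 𝒯 ∧ τ₂ ∈ 𝒯 ∧ τ₂ ⊂ τ₁ ∧ ¬ ∃ τ₃ ∈ 𝒯, τ₂ ⊂ τ₃ ∧ τ₃ ⊂ τ₁

namespace CovEdge

variable {U : Type*} {𝒯 : Set (Set U)}

theorem exists_superset_of_ssubset [Finite U] {σ τ : Set U} (hσ : σ ∈ 𝒯) (hτ : τ ∈ 𝒯)
    (hτσ : τ ⊂ σ) : ∃ c, CovEdge 𝒯 σ c ∧ τ ⊆ c := by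
  obtain ⟨c, hτc, ⟨hc, hcσ⟩, hmax⟩ :=
    (Set.toFinite {x | x ∈ 𝒯 ∧ x ⊂ σ}).exists_le_maximal (a := τ) ⟨hτ, hτσ⟩
  exact ⟨c, ⟨hσ, hc, hcσ, fun ⟨d, hd, hcd, hdσ⟩ => hcd.not_ge (hmax ⟨hd, hdσ⟩ hcd.le)⟩, hτc⟩

theorem reflTransGen_of_subset [Finite U] {σ τ : Set U} (hσ : σ ∈ 𝒯) (hτ : τ ∈ 𝒯)
    (hτσ : τ ⊆ σ) : Relation.ReflTransGen (CovEdge 𝒯) σ τ := by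
  induction σ using WellFoundedLT.induction with
  | _ σ ih =>
    obtain rfl | hne := eq_or_ne τ σ
    · exact .refl
    obtain ⟨c, hσc, hτc⟩ := exists_superset_of_ssubset hσ hτ (hτσ.ssubset_of_ne hne)
    exact .head hσc (ih c hσc.2.2.1 hσc.2.1 hτc)

theorem not_singleton (hne : ∀ s ∈ 𝒯, s.Nonempty) (u : U) (τ : Set U) :
    ¬ CovEdge 𝒯 {u} τ := fun ⟨_, hτ, hτu, _⟩ =>
  (hne τ hτ).ne_empty (Set.ssubset_singleton_iff.mp hτu)

theorem exists_of_not_singleton [Finite U] (hne : ∀ s ∈ 𝒯, s.Nonempty)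
    (hsing : ∀ u, {u} ∈ 𝒯) {τ : Set U} (hτ : τ ∈ 𝒯) (hτu : ∀ u, τ ≠ {u}) :
    ∃ τ', CovEdge 𝒯 τ τ' := by
  obtain ⟨u, hu⟩ := hne τ hτ
  obtain ⟨c, hτc, -⟩ := exists_superset_of_ssubset hτ (hsing u)
    ((Set.singleton_subset_iff.mpr hu).ssubset_of_ne (hτu u).symm)
  exact ⟨c, hτc⟩

theorem not_exists_iff_eq_singleton [Finite U] (hne : ∀ s ∈ 𝒯, s.Nonempty)
    (hsing : ∀ u, {u} ∈ 𝒯) {τ : Set U} (hτ : τ ∈ 𝒯) :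
    (¬ ∃ τ', CovEdge 𝒯 τ τ') ↔ ∃ u, τ = {u} := by
  refine ⟨fun h => ?_, ?_⟩
  · by_contra! hτu
    exact h (exists_of_not_singleton hne hsing hτ hτu)
  · rintro ⟨u, rfl⟩ ⟨τ', hτ'⟩
    exact not_singleton hne u τ' hτ'

end CovEdge

/-- If the projection signature graph is a multitree, then for any σ ∈ 𝒯 the nodes
of 𝒯 below σ form a tree rooted at σ (all reachable from σ, with unique paths,
expressed as unique parents among the reachable nodes), whose leaves are exactly the
singletons of elements of σ. -/
theorem multitree_dominated_tree {U : Type*} [Finite U] (𝒯 : Set (Set U))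
    (hne : ∀ s ∈ 𝒯, s.Nonempty) (hsing : ∀ u : U, {u} ∈ 𝒯)
    (hmt : ∀ v w u₁ u₂ : Set U,
      Relation.ReflTransGen (CovEdge 𝒯) v u₁ → Relation.ReflTransGen (CovEdge 𝒯) v u₂ →
      CovEdge 𝒯 u₁ w → CovEdge 𝒯 u₂ w → u₁ = u₂)
    (σ : Set U) (hσ : σ ∈ 𝒯) :
    (∀ τ ∈ 𝒯, τ ⊆ σ → Relation.ReflTransGen (CovEdge 𝒯) σ τ) ∧
    (∀ τ₁ τ₂, τ₁ ⊆ σ → τ₂ ⊆ σ → τ₁ ∈ 𝒯 → τ₂ ∈ 𝒯 →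
      ∀ u₁ u₂, Relation.ReflTransGen (CovEdge 𝒯) σ u₁ →
        Relation.ReflTransGen (CovEdge 𝒯) σ u₂ →
        CovEdge 𝒯 u₁ τ₂ → CovEdge 𝒯 u₂ τ₂ → u₁ = u₂) ∧
    (∀ τ ∈ 𝒯, τ ⊆ σ → ((¬ ∃ τ', CovEdge 𝒯 τ τ') ↔ ∃ u ∈ σ, τ = {u})) := by
  refine ⟨fun τ hτ hτσ => CovEdge.reflTransGen_of_subset hσ hτ hτσ,
    fun _ τ₂ _ _ _ _ u₁ u₂ => hmt σ τ₂ u₁ u₂, fun τ hτ hτσ => ?_⟩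
  rw [CovEdge.not_exists_iff_eq_singleton hne hsing hτ]
  exact ⟨fun ⟨u, hu⟩ => ⟨u, hτσ (hu ▸ rfl), hu⟩, fun ⟨u, _, hu⟩ => ⟨u, hu⟩⟩
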